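/- arXiv:1307.5402 — 5 statements merged into one kernel-verified Lean document; each statement's English description precedes it below -/
import Mathlib

section
/- If f : (0, b*] → ℝ is (α,m)-convex and nondecreasing, then f is harmonically (α,m)-convex. -/
/-!
The point `m x y / (m t y + (1 - t) x)` is the weighted harmonic mean of `x` and `m y`, which lies
below their weighted arithmetic mean `t x + m (1 - t) y`; monotonicity of `f` then reduces harmonic
`(α, m)`-convexity to `(α, m)`-convexity.
-/

open Set

theorem weighted_harmonic_mean_mem_Ioc {a b t : ℝ} (ha : 0 < a) (hb : 0 < b)
    (ht : t ∈ Icc (0 : ℝ) 1) :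
    a * b / (t * b + (1 - t) * a) ∈ Ioc 0 (t * a + (1 - t) * b) := by
  have hD : 0 < t * b + (1 - t) * a :=
    convex_Ioi (0 : ℝ) hb ha ht.1 (sub_nonneg.2 ht.2) (add_sub_cancel t 1)
  refine ⟨div_pos (mul_pos ha hb) hD, (div_le_iff₀ hD).2 ?_⟩
  have key : (t * a + (1 - t) * b) * (t * b + (1 - t) * a) - a * b
      = t * (1 - t) * (a - b) ^ 2 := by ring
  linarith [mul_nonneg (mul_nonneg ht.1 (sub_nonneg.2 ht.2)) (sq_nonneg (a - b))]

theorem am_convex_nondecreasing_implies_harmonically_am_convex_general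
    (bs α m : ℝ) (hm : m ∈ Set.Ioc (0:ℝ) 1)
    (f : ℝ → ℝ)
    (hconv : ∀ x ∈ Set.Ioc 0 bs, ∀ y ∈ Set.Ioc 0 bs, ∀ t ∈ Set.Icc (0:ℝ) 1,
      t * x + m * (1 - t) * y ∈ Set.Ioc 0 bs →
      f (t * x + m * (1 - t) * y) ≤ t ^ α * f x + m * (1 - t ^ α) * f y)
    (hmono : MonotoneOn f (Set.Ioc 0 bs)) :
    ∀ x ∈ Set.Ioc 0 bs, ∀ y ∈ Set.Ioc 0 bs, ∀ t ∈ Set.Icc (0:ℝ) 1,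
      f (m * x * y / (m * t * y + (1 - t) * x)) ≤ t ^ α * f x + m * (1 - t ^ α) * f y := by
  intro x hx y hy t ht
  have hmy : m * y ∈ Ioc 0 bs :=
    ⟨mul_pos hm.1 hy.1, (mul_le_of_le_one_left hy.1.le hm.2).trans hy.2⟩
  have hA_eq : t * x + m * (1 - t) * y = t * x + (1 - t) * (m * y) := by ring
  have hH_eq : m * x * y / (m * t * y + (1 - t) * x)
      = x * (m * y) / (t * (m * y) + (1 - t) * x) := by ring_nf
  have hA : t * x + m * (1 - t) * y ∈ Ioc 0 bs := by
    rw [hA_eq]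
    exact convex_Ioc 0 bs hx hmy ht.1 (sub_nonneg.2 ht.2) (add_sub_cancel t 1)
  obtain ⟨hH_pos, hHA⟩ := weighted_harmonic_mean_mem_Ioc hx.1 hmy.1 ht
  rw [← hA_eq, ← hH_eq] at hHA
  rw [← hH_eq] at hH_pos
  exact (hmono ⟨hH_pos, hHA.trans hA.2⟩ hA hHA).trans (hconv x hx y hy t ht hA)

theorem am_convex_nondecreasing_implies_harmonically_am_convex
    (bs α m : ℝ) (hbs : 0 < bs) (hα : α ∈ Set.Icc (0:ℝ) 1) (hm : m ∈ Set.Ioc (0:ℝ) 1)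
    (f : ℝ → ℝ)
    (hconv : ∀ x ∈ Set.Ioc 0 bs, ∀ y ∈ Set.Ioc 0 bs, ∀ t ∈ Set.Icc (0:ℝ) 1,
      t * x + m * (1 - t) * y ∈ Set.Ioc 0 bs →
      f (t * x + m * (1 - t) * y) ≤ t ^ α * f x + m * (1 - t ^ α) * f y)
    (hmono : MonotoneOn f (Set.Ioc 0 bs)) :
    ∀ x ∈ Set.Ioc 0 bs, ∀ y ∈ Set.Ioc 0 bs, ∀ t ∈ Set.Icc (0:ℝ) 1,
      f (m * x * y / (m * t * y + (1 - t) * x)) ≤ t ^ α * f x + m * (1 - t ^ α) * f y :=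
  am_convex_nondecreasing_implies_harmonically_am_convex_general bs α m hm f hconv hmono
end

section
/- Let f : (0,∞) → ℝ be harmonically (α,m)-convex with α ∈ [0,1], m ∈ (0,1], 0 < a < b, and f integrable on [a,b]. Then (ab/(b-a)) ∫_a^b f(x)/x² dx ≤ (f(a) + α m f(b/m))/(α + 1). -/
/-! The substitution `x = ab / (tb + (1 - t)a)` maps `t ∈ [0, 1]` onto `x ∈ [a, b]` with
`dt = -(ab / (b - a)) dx / x²`, so the left-hand side equals `∫₀¹ f (ab / (tb + (1 - t)a)) dt`.
Since `ab / (tb + (1 - t)a) = m a (b/m) / (m t (b/m) + (1 - t)a)`, harmonic `(α, m)`-convexity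
with `x = a`, `y = b/m` bounds the integrand by `tᵅ f(a) + m (1 - tᵅ) f(b/m)`, whose integral
is `(f(a) + α m f(b/m)) / (α + 1)`. -/

open intervalIntegral MeasureTheory Set

/-- The inverse of `t ↦ ab / (tb + (1 - t)a)`. -/
noncomputable def harmonicParam (a b x : ℝ) : ℝ := a * (b - x) / (x * (b - a))

section harmonicParam

variable {a b : ℝ}

lemma harmonicParam_left (ha : a ≠ 0) (hab : a ≠ b) : harmonicParam a b a = 1 :=
  div_self (mul_ne_zero ha (sub_ne_zero.mpr hab.symm))

lemma harmonicParam_right : harmonicParam a b b = 0 := by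
  simp [harmonicParam]

lemma harmonicParam_mem_Icc (ha : 0 < a) (hab : a < b) {x : ℝ} (hx : x ∈ Icc a b) :
    harmonicParam a b x ∈ Icc 0 1 := by
  have hx0 : 0 < x := ha.trans_le hx.1
  have hba : 0 < b - a := sub_pos.mpr hab
  refine ⟨div_nonneg (mul_nonneg ha.le (sub_nonneg.mpr hx.2)) (by positivity), ?_⟩
  rw [harmonicParam, div_le_one (by positivity)]
  nlinarith [hx.1]

lemma hasDerivAt_harmonicParam {x : ℝ} (hx : x ≠ 0) :
    HasDerivAt (harmonicParam a b) (-(a * b / (b - a) / x ^ 2)) x := by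
  by_cases hab : b - a = 0
  · obtain rfl : b = a := sub_eq_zero.mp hab
    have hconst : harmonicParam b b = fun _ => 0 := funext fun y => by simp [harmonicParam]
    simpa [hconst] using hasDerivAt_const x (0 : ℝ)
  have hnum : HasDerivAt (fun x => a * (b - x)) (-a) x := by
    simpa using ((hasDerivAt_id x).const_sub b).const_mul a
  have hden : HasDerivAt (fun x => x * (b - a)) (b - a) x := by
    simpa using (hasDerivAt_id x).mul_const (b - a)
  refine (hnum.div hden (mul_ne_zero hx hab)).congr_deriv ?_
  field_simp
  ring

lemma harmonicMean_harmonicParam (ha : a ≠ 0) (hb : b ≠ 0) (hab : a ≠ b) {x : ℝ} (hx : x ≠ 0) :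
    a * b / (harmonicParam a b x * b + (1 - harmonicParam a b x) * a) = x := by
  have hba : b - a ≠ 0 := sub_ne_zero.mpr hab.symm
  have hden : harmonicParam a b x * b + (1 - harmonicParam a b x) * a = a * b / x := by
    rw [harmonicParam]
    field_simp
    ring
  rw [hden, div_div_cancel₀ (mul_ne_zero ha hb)]

lemma integral_comp_harmonicParam_mul (ha : 0 < a) (hab : a < b) {g : ℝ → ℝ}
    (hg : ContinuousOn g (Icc 0 1)) :
    ∫ x in a..b, g (harmonicParam a b x) * (a * b / (b - a) / x ^ 2) = ∫ t in 0..1, g t := by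
  have hderiv : ∀ x ∈ uIcc a b,
      HasDerivAt (harmonicParam a b) (-(a * b / (b - a) / x ^ 2)) x := fun x hx =>
    hasDerivAt_harmonicParam (ha.trans_le (uIcc_of_le hab.le ▸ hx).1).ne'
  have hderiv_cont : ContinuousOn (fun x => -(a * b / (b - a) / x ^ 2)) (uIcc a b) := by
    refine (continuousOn_const.div (continuousOn_pow 2) fun x hx => ?_).neg
    exact pow_ne_zero 2 (ha.trans_le (uIcc_of_le hab.le ▸ hx).1).ne'
  have hsubst := integral_comp_mul_deriv' hderiv hderiv_cont (hg.mono ?_)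
  · rw [harmonicParam_left ha.ne' hab.ne, harmonicParam_right] at hsubst
    simp only [Function.comp_apply, mul_neg, intervalIntegral.integral_neg] at hsubst
    rw [integral_symm 0 1] at hsubst
    linarith
  · rintro _ ⟨x, hx, rfl⟩
    exact harmonicParam_mem_Icc ha hab (uIcc_of_le hab.le ▸ hx)

lemma mul_integral_div_sq_le_integral_of_le_comp_harmonicParam (ha : 0 < a) (hab : a < b)
    {f g : ℝ → ℝ} (hf : IntervalIntegrable f volume a b) (hg : ContinuousOn g (Icc 0 1))
    (hfg : ∀ x ∈ Icc a b, f x ≤ g (harmonicParam a b x)) :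
    a * b / (b - a) * ∫ x in a..b, f x / x ^ 2 ≤ ∫ t in 0..1, g t := by
  have hb : 0 < b := ha.trans hab
  have hba : 0 < b - a := sub_pos.mpr hab
  have hx0 : ∀ x ∈ Icc a b, 0 < x := fun x hx => ha.trans_le hx.1
  have hjac : ContinuousOn (fun x => a * b / (b - a) / x ^ 2) (Icc a b) :=
    continuousOn_const.div (continuousOn_pow 2) fun x hx => pow_ne_zero 2 (hx0 x hx).ne'
  have hparam : ContinuousOn (harmonicParam a b) (Icc a b) :=
    continuousOn_of_forall_continuousAt fun x hx =>
      (hasDerivAt_harmonicParam (hx0 x hx).ne').continuousAt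
  have hg_comp : ContinuousOn (fun x => g (harmonicParam a b x)) (Icc a b) :=
    hg.comp hparam fun x hx => harmonicParam_mem_Icc ha hab hx
  rw [← uIcc_of_le hab.le] at hjac hg_comp
  calc a * b / (b - a) * ∫ x in a..b, f x / x ^ 2
      = ∫ x in a..b, f x * (a * b / (b - a) / x ^ 2) := by
        rw [← intervalIntegral.integral_const_mul]
        congr 1 with x
        ring
    _ ≤ ∫ x in a..b, g (harmonicParam a b x) * (a * b / (b - a) / x ^ 2) :=
        integral_mono_on hab.le (hf.mul_continuousOn hjac)
          ((hg_comp.mul hjac).intervalIntegrable) fun x hx =>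
          mul_le_mul_of_nonneg_right (hfg x hx) (by positivity)
    _ = ∫ t in 0..1, g t := integral_comp_harmonicParam_mul ha hab hg

end harmonicParam

lemma integral_rpow_mul_add_one_sub_rpow_mul {α : ℝ} (hα : -1 < α) (u v : ℝ) :
    ∫ t in (0 : ℝ)..1, (t ^ α * u + (1 - t ^ α) * v) = (u + α * v) / (α + 1) := by
  have hα1 : α + 1 ≠ 0 := by linarith
  have hsplit : (fun t : ℝ => t ^ α * u + (1 - t ^ α) * v) = fun t => v + t ^ α * (u - v) := by
    funext t; ring
  rw [hsplit, integral_add intervalIntegrable_const ((intervalIntegrable_rpow' hα).mul_const _),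
    intervalIntegral.integral_mul_const, integral_rpow (Or.inl hα)]
  simp only [intervalIntegral.integral_const, smul_eq_mul, Real.zero_rpow hα1, Real.one_rpow]
  field_simp
  ring

theorem hermite_hadamard_right_harmonically_am_convex
    (f : ℝ → ℝ) (α m a b : ℝ) (hα : α ∈ Set.Icc (0:ℝ) 1) (hm : m ∈ Set.Ioc (0:ℝ) 1)
    (ha : 0 < a) (hab : a < b)
    (hconv : ∀ x : ℝ, 0 < x → ∀ y : ℝ, 0 < y → ∀ t ∈ Set.Icc (0:ℝ) 1,
      f (m * x * y / (m * t * y + (1 - t) * x)) ≤ t ^ α * f x + m * (1 - t ^ α) * f y)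
    (hint : IntervalIntegrable f volume a b) :
    (a * b / (b - a)) * ∫ x in a..b, f x / x ^ 2 ≤ (f a + α * m * f (b / m)) / (α + 1) := by
  have hb : 0 < b := ha.trans hab
  have hweight : ContinuousOn (fun t : ℝ => t ^ α * f a + (1 - t ^ α) * (m * f (b / m)))
      (Icc 0 1) := by
    have hpow : ContinuousOn (fun t : ℝ => t ^ α) (Icc 0 1) :=
      continuousOn_id.rpow_const fun _ _ => Or.inr hα.1
    fun_prop
  have hbound : ∀ x ∈ Icc a b, f x ≤ harmonicParam a b x ^ α * f a
      + (1 - harmonicParam a b x ^ α) * (m * f (b / m)) := by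
    intro x hx
    have h := hconv a ha (b / m) (div_pos hb hm.1) _ (harmonicParam_mem_Icc ha hab hx)
    have hpoint : m * a * (b / m) / (m * harmonicParam a b x * (b / m)
        + (1 - harmonicParam a b x) * a) = x := by
      have hscale : ∀ s, m * s * (b / m) = s * b := fun s => by field_simp [hm.1.ne']
      rw [hscale, hscale]
      exact harmonicMean_harmonicParam ha.ne' hb.ne' hab.ne (ha.trans_le hx.1).ne'
    rw [hpoint] at h
    linarith
  calc a * b / (b - a) * ∫ x in a..b, f x / x ^ 2
      ≤ ∫ t in 0..1, (t ^ α * f a + (1 - t ^ α) * (m * f (b / m))) :=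
        mul_integral_div_sq_le_integral_of_le_comp_harmonicParam ha hab hint hweight hbound
    _ = (f a + α * m * f (b / m)) / (α + 1) := by
        rw [integral_rpow_mul_add_one_sub_rpow_mul (by linarith [hα.1]), mul_assoc]
end

section
/- Let f : (0,∞) → ℝ be harmonically (α,m)-convex with α ∈ [0,1], m ∈ (0,1], 0 < a < b, and f integrable on [a,b]. Then (ab/(b-a)) ∫_a^b f(x)/x² dx ≤ min{ (f(a) + α m f(b/m))/(α+1), (f(b) + α m f(a/m))/(α+1) }. -/
/-!
The substitution `x = ((1 - t) / a + t / b)⁻¹` maps `[0, 1]` onto `[a, b]` with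
`dx / x² = (1 / a - 1 / b) dt`, so `(a b / (b - a)) ∫_a^b f(x) / x² dx` is the mean of
`t ↦ f(x(t))` over `[0, 1]`. The point `x(t)` is exactly the harmonic combination in the
convexity inequality, for the endpoints `(b, a / m)` with weight `t`, and for `(a, b / m)` with
weight `1 - t`. Bounding `f(x(t))` accordingly and integrating, with `∫_0^1 t^α dt = 1 / (α + 1)`,
gives both bounds.
-/

open intervalIntegral MeasureTheory

def IsHarmonicallyAlphaMConvex (α m : ℝ) (f : ℝ → ℝ) : Prop :=
  ∀ x : ℝ, 0 < x → ∀ y : ℝ, 0 < y → ∀ t ∈ Set.Icc (0:ℝ) 1,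
    f (m * x * y / (m * t * y + (1 - t) * x)) ≤ t ^ α * f x + m * (1 - t ^ α) * f y

noncomputable def harmonicInterp (a b t : ℝ) : ℝ := ((1 - t) * a⁻¹ + t * b⁻¹)⁻¹

section harmonicInterp

variable {a b t : ℝ}

@[simp] lemma harmonicInterp_zero (a b : ℝ) : harmonicInterp a b 0 = a := by
  simp [harmonicInterp]

@[simp] lemma harmonicInterp_one (a b : ℝ) : harmonicInterp a b 1 = b := by
  simp [harmonicInterp]

lemma harmonicInterp_comm (a b t : ℝ) : harmonicInterp b a t = harmonicInterp a b (1 - t) := by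
  simp only [harmonicInterp]; ring_nf

lemma inv_harmonicInterp_pos (ha : 0 < a) (hb : 0 < b) (ht : t ∈ Set.Icc (0:ℝ) 1) :
    0 < (1 - t) * a⁻¹ + t * b⁻¹ := by
  obtain ⟨ht0, ht1⟩ := ht
  rcases ht0.eq_or_lt with rfl | ht0
  · simpa using ha
  · have := inv_pos.2 hb
    nlinarith [inv_pos.2 ha]

lemma harmonicInterp_pos (ha : 0 < a) (hb : 0 < b) (ht : t ∈ Set.Icc (0:ℝ) 1) :
    0 < harmonicInterp a b t :=
  inv_pos.2 (inv_harmonicInterp_pos ha hb ht)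

lemma hasDerivAt_harmonicInterp (ht : (1 - t) * a⁻¹ + t * b⁻¹ ≠ 0) :
    HasDerivAt (harmonicInterp a b) ((a⁻¹ - b⁻¹) * harmonicInterp a b t ^ 2) t := by
  have hL : HasDerivAt (fun s => (1 - s) * a⁻¹ + s * b⁻¹) (b⁻¹ - a⁻¹) t :=
    ((((hasDerivAt_id' t).const_sub 1).mul_const a⁻¹).add
      ((hasDerivAt_id' t).mul_const b⁻¹)).congr_deriv (by ring)
  refine (hL.inv ht).congr_deriv ?_
  rw [harmonicInterp, inv_pow]
  ring

lemma hasDerivAt_harmonicInterp_of_mem_Icc (ha : 0 < a) (hb : 0 < b)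
    (ht : t ∈ Set.Icc (0:ℝ) 1) :
    HasDerivAt (harmonicInterp a b) ((a⁻¹ - b⁻¹) * harmonicInterp a b t ^ 2) t :=
  hasDerivAt_harmonicInterp (inv_harmonicInterp_pos ha hb ht).ne'

end harmonicInterp

lemma integral_div_sq_eq_integral_comp_harmonicInterp {a b : ℝ} (ha : 0 < a) (hab : a ≤ b)
    (g : ℝ → ℝ) :
    ∫ x in a..b, g x / x ^ 2 =
      (a⁻¹ - b⁻¹) * ∫ t in (0:ℝ)..1, g (harmonicInterp a b t) := by
  have hb := ha.trans_le hab
  have hsubst := integral_comp_mul_deriv_of_deriv_nonneg (a := 0) (b := 1)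
    (g := fun x => g x / x ^ 2)
    (fun t ht => (hasDerivAt_harmonicInterp_of_mem_Icc ha hb (by simpa using ht)).continuousAt
      |>.continuousWithinAt)
    (fun t ht => hasDerivAt_harmonicInterp_of_mem_Icc ha hb
      (Set.Ioo_subset_Icc_self (by simpa using ht)))
    (fun t _ => mul_nonneg (sub_nonneg.2 (inv_anti₀ ha hab)) (sq_nonneg _))
  rw [harmonicInterp_zero, harmonicInterp_one] at hsubst
  rw [← hsubst, ← intervalIntegral.integral_const_mul]
  refine integral_congr fun t ht => ?_
  have := (harmonicInterp_pos ha hb (by simpa using ht)).ne'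
  simp only [Function.comp_apply]
  field_simp

lemma IntervalIntegrable.comp_harmonicInterp {f : ℝ → ℝ} {a b : ℝ}
    (hf : IntervalIntegrable f volume a b) (ha : 0 < a) (hab : a < b) :
    IntervalIntegrable (fun t => f (harmonicInterp a b t)) volume 0 1 := by
  have hb := ha.trans hab
  have hdiv : IntervalIntegrable (fun x => f x / x ^ 2) volume a b := by
    refine hf.mul_continuousOn (g := fun x => (x ^ 2)⁻¹) ?_
    exact (continuousOn_pow 2).inv₀ fun x hx => by
      have : 0 < x := ha.trans_le (by simpa [hab.le] using hx.1); positivity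
  have hsubst := (integrable_comp_mul_deriv_iff_of_deriv_nonneg (a := 0) (b := 1)
    (g := fun x => f x / x ^ 2)
    (fun t ht => (hasDerivAt_harmonicInterp_of_mem_Icc ha hb (by simpa using ht)).continuousAt
      |>.continuousWithinAt)
    (fun t ht => hasDerivAt_harmonicInterp_of_mem_Icc ha hb
      (Set.Ioo_subset_Icc_self (by simpa using ht)))
    (fun t _ => mul_nonneg (sub_nonneg.2 (inv_anti₀ ha hab.le)) (sq_nonneg _))).2
    (by simpa using hdiv)
  have hba : b - a ≠ 0 := sub_ne_zero.2 hab.ne'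
  refine (hsubst.const_mul (a⁻¹ - b⁻¹)⁻¹).congr ?_
  intro t ht
  have := (harmonicInterp_pos ha hb (Set.Ioc_subset_Icc_self (by simpa using ht))).ne'
  simp only [Function.comp_apply]
  field_simp

lemma integral_zero_one_le_of_le_rpow_mul_add {α m P Q : ℝ} {F : ℝ → ℝ} (hα : -1 < α)
    (hF : IntervalIntegrable F volume 0 1)
    (hle : ∀ t ∈ Set.Icc (0:ℝ) 1, F t ≤ t ^ α * P + m * (1 - t ^ α) * Q) :
    ∫ t in (0:ℝ)..1, F t ≤ (P + α * m * Q) / (α + 1) := by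
  have hpow : IntervalIntegrable (fun t : ℝ => t ^ α) volume 0 1 := intervalIntegrable_rpow' hα
  have hweight : IntervalIntegrable (fun t : ℝ => m * (1 - t ^ α) * Q) volume 0 1 :=
    ((intervalIntegrable_const.sub hpow).const_mul m).mul_const Q
  have hmoment : ∫ t in (0:ℝ)..1, t ^ α = (α + 1)⁻¹ := by
    simpa [Real.zero_rpow (by linarith : α + 1 ≠ 0)] using
      integral_rpow (a := 0) (b := 1) (Or.inl hα)
  calc ∫ t in (0:ℝ)..1, F t ≤ ∫ t in (0:ℝ)..1, (t ^ α * P + m * (1 - t ^ α) * Q) :=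
        integral_mono_on zero_le_one hF ((hpow.mul_const P).add hweight) hle
    _ = (P + α * m * Q) / (α + 1) := by
        rw [integral_add (hpow.mul_const P) hweight, intervalIntegral.integral_mul_const,
          intervalIntegral.integral_mul_const, intervalIntegral.integral_const_mul,
          integral_sub intervalIntegrable_const hpow, hmoment, intervalIntegral.integral_const]
        have : α + 1 ≠ 0 := by linarith
        field_simp
        simp only [sub_zero, smul_eq_mul, mul_one]
        ring

lemma IsHarmonicallyAlphaMConvex.le_harmonicInterp {α m : ℝ} {f : ℝ → ℝ}
    (hf : IsHarmonicallyAlphaMConvex α m f) (hm : 0 < m) {x y t : ℝ} (hx : 0 < x) (hy : 0 < y)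
    (ht : t ∈ Set.Icc (0:ℝ) 1) :
    f (harmonicInterp y x t) ≤ t ^ α * f x + m * (1 - t ^ α) * f (y / m) := by
  have hpt : m * x * (y / m) / (m * t * (y / m) + (1 - t) * x) = harmonicInterp y x t := by
    have := (inv_harmonicInterp_pos hy hx ht).ne'
    rw [harmonicInterp]
    field_simp
    ring
  simpa only [hpt] using hf x hx (y / m) (div_pos hy hm) t ht

theorem hermite_hadamard_right_harmonically_am_convex_min
    (f : ℝ → ℝ) (α m a b : ℝ) (hα : α ∈ Set.Icc (0:ℝ) 1) (hm : m ∈ Set.Ioc (0:ℝ) 1)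
    (ha : 0 < a) (hab : a < b)
    (hconv : ∀ x : ℝ, 0 < x → ∀ y : ℝ, 0 < y → ∀ t ∈ Set.Icc (0:ℝ) 1,
      f (m * x * y / (m * t * y + (1 - t) * x)) ≤ t ^ α * f x + m * (1 - t ^ α) * f y)
    (hint : IntervalIntegrable f volume a b) :
    (a * b / (b - a)) * ∫ x in a..b, f x / x ^ 2 ≤
      min ((f a + α * m * f (b / m)) / (α + 1)) ((f b + α * m * f (a / m)) / (α + 1)) := by
  have hb := ha.trans hab
  have hα' : -1 < α := by linarith [hα.1]
  have hF := hint.comp_harmonicInterp ha hab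
  have hmean : a * b / (b - a) * ∫ x in a..b, f x / x ^ 2 =
      ∫ t in (0:ℝ)..1, f (harmonicInterp a b t) := by
    rw [integral_div_sq_eq_integral_comp_harmonicInterp ha hab.le]
    field_simp [sub_ne_zero.2 hab.ne']
  have hreflect : ∫ t in (0:ℝ)..1, f (harmonicInterp b a t) =
      ∫ t in (0:ℝ)..1, f (harmonicInterp a b t) := by
    simp only [harmonicInterp_comm a b]
    simpa using integral_comp_sub_left (a := 0) (b := 1) (fun t => f (harmonicInterp a b t)) 1
  rw [hmean]
  refine le_min ?_ ?_
  · rw [← hreflect]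
    refine integral_zero_one_le_of_le_rpow_mul_add hα' ?_ fun t ht =>
      IsHarmonicallyAlphaMConvex.le_harmonicInterp hconv hm.1 ha hb ht
    simpa only [sub_self, sub_zero, ← harmonicInterp_comm a b] using (hF.comp_sub_left 1).symm
  · exact integral_zero_one_le_of_le_rpow_mul_add hα' hF fun t ht =>
      IsHarmonicallyAlphaMConvex.le_harmonicInterp hconv hm.1 hb ha ht
end

section
/- For 0 < a < b, q ≥ 1, α ∈ [0,1], we have ∫_0^1 |1-2t| t^α/(tb+(1-t)a)^{2q} dt = β(1,α+2)/b^{2q} · ₂F₁(2q,1;α+3;1−a/b) − β(2,α+1)/b^{2q} · ₂F₁(2q,2;α+3;1−a/b) + 2^{2q−α} β(2,α+1)/(a+b)^{2q} · ₂F₁(2q,2;α+3;1−2a/(a+b)). -/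
open intervalIntegral MeasureTheory

noncomputable def betaFn (x y : ℝ) : ℝ :=
  ∫ t in (0:ℝ)..1, t ^ (x - 1) * (1 - t) ^ (y - 1)

noncomputable def hyp2F1 (a b c z : ℝ) : ℝ :=
  (1 / betaFn b (c - b)) * ∫ t in (0:ℝ)..1, t ^ (b - 1) * (1 - t) ^ (c - b - 1) * (1 - z * t) ^ (-a)

/-!
Write `w(s) = s^α / (s b + (1 - s) a)^(2q)` and split `|1 - 2s| = (2s - 1) + 2 (1 - 2s)⁺`, so the
integral is `∫₀¹ s w - ∫₀¹ (1 - s) w + 2 ∫₀^{1/2} (1 - 2s) w`. Substituting `t = 1 - s` in Euler's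
integral and using `(1 - t) b + t a = b (1 - (1 - a/b) t)` identifies the first two terms with the
`₂F₁(2q, 1; α + 3; 1 - a/b)` and `₂F₁(2q, 2; α + 3; 1 - a/b)` terms. The third is the same computation
with `(a, b)` replaced by `(2a, a + b)`, followed by `s ↦ 2s`, which turns `s (a + b) + (1 - s) 2a`
into `2 (s b + (1 - s) a)`.
-/

open Set

theorem betaFn_pos {x y : ℝ} (hx : 1 ≤ x) (hy : 1 ≤ y) : 0 < betaFn x y := by
  refine intervalIntegral_pos_of_pos_on ?_ (fun t ht => ?_) zero_lt_one
  · refine ContinuousOn.intervalIntegrable (ContinuousOn.mul ?_ ?_)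
    · exact continuousOn_id.rpow_const fun _ _ => Or.inr (by linarith)
    · exact (continuousOn_const.sub continuousOn_id).rpow_const fun _ _ => Or.inr (by linarith)
  · have := Real.rpow_pos_of_pos ht.1 (x - 1)
    have := Real.rpow_pos_of_pos (sub_pos.2 ht.2) (y - 1)
    positivity

theorem integral_abs_one_sub_two_mul_mul {f : ℝ → ℝ} (hf : IntervalIntegrable f volume 0 1) :
    ∫ s in (0:ℝ)..1, |1 - 2 * s| * f s =
      (∫ s in (0:ℝ)..1, s * f s) - (∫ s in (0:ℝ)..1, (1 - s) * f s)
        + ∫ s in (0:ℝ)..1 / 2, 2 * (1 - 2 * s) * f s := by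
  have hf₁ : IntervalIntegrable f volume 0 (1 / 2) :=
    hf.mono_set (uIcc_subset_uIcc left_mem_uIcc (by norm_num))
  have hf₂ : IntervalIntegrable f volume (1 / 2) 1 :=
    hf.mono_set (uIcc_subset_uIcc (by norm_num) right_mem_uIcc)
  have hmul : ∀ {u v : ℝ} (g : ℝ → ℝ), Continuous g → IntervalIntegrable f volume u v →
      IntervalIntegrable (fun s => g s * f s) volume u v :=
    fun g hg hf => hf.continuousOn_mul hg.continuousOn
  have habs_left :
      EqOn (fun s => |1 - 2 * s| * f s) (fun s => (1 - 2 * s) * f s) (uIcc 0 (1 / 2)) := by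
    intro s hs
    rw [uIcc_of_le (by norm_num)] at hs
    simp only [abs_of_nonneg (by linarith [hs.2] : (0:ℝ) ≤ 1 - 2 * s)]
  have habs_right :
      EqOn (fun s => |1 - 2 * s| * f s) (fun s => (2 * s - 1) * f s) (uIcc (1 / 2) 1) := by
    intro s hs
    rw [uIcc_of_le (by norm_num)] at hs
    simp only [abs_of_nonpos (by linarith [hs.1] : 1 - 2 * s ≤ 0), neg_sub]
  have hdiff : (∫ s in (0:ℝ)..1, s * f s) - (∫ s in (0:ℝ)..1, (1 - s) * f s)
      = (∫ s in (0:ℝ)..1 / 2, (2 * s - 1) * f s) + ∫ s in (1 / 2 : ℝ)..1, (2 * s - 1) * f s := by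
    rw [← integral_sub (hmul _ (by fun_prop) hf) (hmul _ (by fun_prop) hf),
      integral_add_adjacent_intervals (hmul _ (by fun_prop) hf₁) (hmul _ (by fun_prop) hf₂)]
    exact integral_congr fun s _ => by ring
  have hleft : ∫ s in (0:ℝ)..1 / 2, (1 - 2 * s) * f s
      = (∫ s in (0:ℝ)..1 / 2, (2 * s - 1) * f s) + ∫ s in (0:ℝ)..1 / 2, 2 * (1 - 2 * s) * f s := by
    rw [← integral_add (hmul _ (by fun_prop) hf₁) (hmul _ (by fun_prop) hf₁)]
    exact integral_congr fun s _ => by ring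
  rw [← integral_add_adjacent_intervals (hmul _ (by fun_prop) hf₁) (hmul _ (by fun_prop) hf₂),
    integral_congr habs_left, integral_congr habs_right, hdiff, hleft]
  ring

noncomputable def affineWeight (a b p α s : ℝ) : ℝ := s ^ α / (s * b + (1 - s) * a) ^ p

theorem continuousOn_affineWeight {a b α : ℝ} (ha : 0 < a) (hb : 0 < b) (hα : 0 ≤ α) (p : ℝ) :
    ContinuousOn (affineWeight a b p α) (Icc 0 1) := by
  have hpos : ∀ s ∈ Icc (0:ℝ) 1, 0 < s * b + (1 - s) * a := fun s hs => by
    rcases le_total a b with h | h <;> nlinarith [hs.1, hs.2]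
  refine (continuousOn_id.rpow_const fun _ _ => Or.inr hα).div
    ((ContinuousOn.rpow_const (by fun_prop) fun s hs => Or.inl (hpos s hs).ne'))
    fun s hs => (Real.rpow_pos_of_pos (hpos s hs) p).ne'

theorem hyp2F1_one_sub_div {a b : ℝ} (ha : 0 ≤ a) (hb : 0 < b) (p β γ : ℝ) :
    hyp2F1 p β γ (1 - a / b) = b ^ p / betaFn β (γ - β) *
      ∫ s in (0:ℝ)..1, (1 - s) ^ (β - 1) * s ^ (γ - β - 1) / (s * b + (1 - s) * a) ^ p := by
  have hreflect := integral_comp_sub_left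
    (fun s => (1 - s) ^ (β - 1) * s ^ (γ - β - 1) / (s * b + (1 - s) * a) ^ p) 1 (a := 0) (b := 1)
  norm_num only at hreflect
  rw [hyp2F1, ← hreflect, ← intervalIntegral.integral_const_mul,
    ← intervalIntegral.integral_const_mul]
  refine integral_congr fun t ht => ?_
  rw [uIcc_of_le zero_le_one] at ht
  have hX : 0 ≤ 1 - (1 - a / b) * t := by
    have : 0 ≤ a / b * t := by have := ht.1; positivity
    nlinarith [ht.2]
  have hscale : (1 - t) * b + t * a = b * (1 - (1 - a / b) * t) := by
    field_simp; ring
  simp only [sub_sub_cancel]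
  rw [hscale, Real.mul_rpow hb.le hX, Real.rpow_neg hX]
  have : b ^ p ≠ 0 := (Real.rpow_pos_of_pos hb p).ne'
  field_simp

theorem betaFn_div_mul_hyp2F1_one {a b α : ℝ} (ha : 0 ≤ a) (hb : 0 < b) (hα : 0 ≤ α) (p : ℝ) :
    betaFn 1 (α + 2) / b ^ p * hyp2F1 p 1 (α + 3) (1 - a / b) =
      ∫ s in (0:ℝ)..1, s * affineWeight a b p α s := by
  have hβ := (betaFn_pos le_rfl (by linarith : 1 ≤ α + 2)).ne'
  have hbp := (Real.rpow_pos_of_pos hb p).ne'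
  rw [hyp2F1_one_sub_div ha hb, show α + 3 - 1 = α + 2 by ring, ← mul_assoc,
    div_mul_div_cancel₀' hβ, div_self hbp, one_mul]
  refine integral_congr fun s hs => ?_
  rw [uIcc_of_le zero_le_one] at hs
  rw [sub_self, Real.rpow_zero, one_mul, show α + 2 - 1 = 1 + α by ring,
    Real.rpow_add' hs.1 (by linarith), Real.rpow_one, affineWeight, mul_div_assoc]

theorem betaFn_div_mul_hyp2F1_two {a b α : ℝ} (ha : 0 ≤ a) (hb : 0 < b) (hα : 0 ≤ α) (p : ℝ) :
    betaFn 2 (α + 1) / b ^ p * hyp2F1 p 2 (α + 3) (1 - a / b) =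
      ∫ s in (0:ℝ)..1, (1 - s) * affineWeight a b p α s := by
  have hβ := (betaFn_pos one_le_two (by linarith : 1 ≤ α + 1)).ne'
  have hbp := (Real.rpow_pos_of_pos hb p).ne'
  rw [hyp2F1_one_sub_div ha hb, show α + 3 - 2 = α + 1 by ring, ← mul_assoc,
    div_mul_div_cancel₀' hβ, div_self hbp, one_mul]
  refine integral_congr fun s _ => ?_
  norm_num only [add_sub_cancel_right, Real.rpow_one, affineWeight, mul_div_assoc]

theorem two_rpow_mul_betaFn_div_mul_hyp2F1_two {a b α : ℝ} (ha : 0 ≤ a) (hb : 0 < b) (hα : 0 ≤ α)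
    (p : ℝ) :
    2 ^ (p - α) * betaFn 2 (α + 1) / (a + b) ^ p * hyp2F1 p 2 (α + 3) (1 - 2 * a / (a + b)) =
      ∫ s in (0:ℝ)..1 / 2, 2 * (1 - 2 * s) * affineWeight a b p α s := by
  have hβ := (betaFn_pos one_le_two (by linarith : 1 ≤ α + 1)).ne'
  have habp := (Real.rpow_pos_of_pos (by linarith : 0 < a + b) p).ne'
  set g : ℝ → ℝ := fun s => (1 - s) ^ ((2:ℝ) - 1) * s ^ (α + 1 - 1) /
    (s * (a + b) + (1 - s) * (2 * a)) ^ p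
  have hhalve := integral_comp_mul_left g two_ne_zero (a := 0) (b := 1 / 2)
  norm_num only [mul_zero, mul_one_div_cancel, smul_eq_mul] at hhalve
  calc 2 ^ (p - α) * betaFn 2 (α + 1) / (a + b) ^ p * hyp2F1 p 2 (α + 3) (1 - 2 * a / (a + b))
      = 2 ^ (p - α) * ∫ s in (0:ℝ)..1, g s := by
        rw [hyp2F1_one_sub_div (by positivity) (by linarith), show α + 3 - 2 = α + 1 by ring,
          ← mul_assoc]
        congr 1
        field_simp
    _ = 2 ^ (p - α) * (2 * ∫ s in (0:ℝ)..1 / 2, g (2 * s)) := by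
        rw [hhalve]; ring
    _ = _ := by
        rw [← intervalIntegral.integral_const_mul, ← intervalIntegral.integral_const_mul]
        refine integral_congr fun s hs => ?_
        rw [uIcc_of_le (by norm_num)] at hs
        have hD : 0 ≤ s * b + (1 - s) * a := by nlinarith [hs.1, hs.2]
        simp only [g, affineWeight]
        rw [show 2 * s * (a + b) + (1 - 2 * s) * (2 * a) = 2 * (s * b + (1 - s) * a) by ring,
          Real.mul_rpow zero_le_two hD, Real.mul_rpow zero_le_two hs.1, Real.rpow_sub two_pos]
        norm_num only [add_sub_cancel_right, Real.rpow_one]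
        field_simp

theorem lam_hypergeometric_general (a b q α : ℝ) (ha : 0 < a) (hab : a < b)
    (hα : α ∈ Set.Icc (0:ℝ) 1) :
    ∫ t in (0:ℝ)..1, |1 - 2 * t| * t ^ α / (t * b + (1 - t) * a) ^ (2 * q) =
      betaFn 1 (α + 2) / b ^ (2 * q) * hyp2F1 (2 * q) 1 (α + 3) (1 - a / b)
        - betaFn 2 (α + 1) / b ^ (2 * q) * hyp2F1 (2 * q) 2 (α + 3) (1 - a / b)
        + 2 ^ (2 * q - α) * betaFn 2 (α + 1) / (a + b) ^ (2 * q) *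
            hyp2F1 (2 * q) 2 (α + 3) (1 - 2 * a / (a + b)) := by
  have hb : 0 < b := ha.trans hab
  have hw : IntervalIntegrable (affineWeight a b (2 * q) α) volume 0 1 :=
    ((continuousOn_affineWeight ha hb hα.1 _).mono
      (uIcc_of_le zero_le_one).subset).intervalIntegrable
  have hlhs : ∫ t in (0:ℝ)..1, |1 - 2 * t| * t ^ α / (t * b + (1 - t) * a) ^ (2 * q) =
      ∫ t in (0:ℝ)..1, |1 - 2 * t| * affineWeight a b (2 * q) α t :=
    integral_congr fun t _ => mul_div_assoc _ _ _
  rw [hlhs, integral_abs_one_sub_two_mul_mul hw, betaFn_div_mul_hyp2F1_one ha.le hb hα.1,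
    betaFn_div_mul_hyp2F1_two ha.le hb hα.1, two_rpow_mul_betaFn_div_mul_hyp2F1_two ha.le hb hα.1]

theorem lam_hypergeometric (a b q α : ℝ) (ha : 0 < a) (hab : a < b) (hq : 1 ≤ q)
    (hα : α ∈ Set.Icc (0:ℝ) 1) :
    ∫ t in (0:ℝ)..1, |1 - 2 * t| * t ^ α / (t * b + (1 - t) * a) ^ (2 * q) =
      betaFn 1 (α + 2) / b ^ (2 * q) * hyp2F1 (2 * q) 1 (α + 3) (1 - a / b)
        - betaFn 2 (α + 1) / b ^ (2 * q) * hyp2F1 (2 * q) 2 (α + 3) (1 - a / b)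
        + 2 ^ (2 * q - α) * betaFn 2 (α + 1) / (a + b) ^ (2 * q) *
            hyp2F1 (2 * q) 2 (α + 3) (1 - 2 * a / (a + b)) :=
  lam_hypergeometric_general a b q α ha hab hα
end

section
/- Let 0 < a < b. Define λ₁ = 1/(ab) − (2/(b−a)²)·ln((a+b)²/(4ab)). Then ∫_0^1 |1−2t|/(tb+(1−t)a)² dt = λ₁. -/
open intervalIntegral MeasureTheory

/-!
With `u = t * b + (1 - t) * a` one has `1 - 2 t = ((a + b) - 2 u) / (b - a)` and `du = (b - a) dt`,
so the integrand without the absolute value has the explicit primitive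
`-(a + b) / ((b - a) ^ 2 u) - 2 log u / (b - a) ^ 2`. Since `1 - 2 t` changes sign only at `t = 1/2`,
the integral is `2 F(1/2) - F(0) - F(1)` for that primitive `F`, which simplifies to `λ₁`.
-/

theorem integral_abs_eq_of_hasDerivAt_of_sign_change {F g : ℝ → ℝ} {a b c : ℝ}
    (hac : a ≤ c) (hcb : c ≤ b) (hF : ∀ x ∈ Set.Icc a b, HasDerivAt F (g x) x)
    (hg : IntervalIntegrable g volume a b) (hpos : ∀ x ∈ Set.Icc a c, 0 ≤ g x)
    (hneg : ∀ x ∈ Set.Icc c b, g x ≤ 0) :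
    ∫ x in a..b, |g x| = 2 * F c - F a - F b := by
  have hg_ac : IntervalIntegrable g volume a c :=
    hg.mono_set (Set.uIcc_subset_uIcc_left (Set.mem_uIcc_of_le hac hcb))
  have hg_cb : IntervalIntegrable g volume c b :=
    hg.mono_set (Set.uIcc_subset_uIcc_right (Set.mem_uIcc_of_le hac hcb))
  have h_ac : ∫ x in a..c, |g x| = F c - F a := by
    rw [integral_congr fun x hx => abs_of_nonneg (hpos x (by rwa [Set.uIcc_of_le hac] at hx))]
    refine integral_eq_sub_of_hasDerivAt (fun x hx => hF x ?_) hg_ac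
    rw [Set.uIcc_of_le hac] at hx
    exact ⟨hx.1, hx.2.trans hcb⟩
  have h_cb : ∫ x in c..b, |g x| = -(F b - F c) := by
    rw [integral_congr fun x hx => abs_of_nonpos (hneg x (by rwa [Set.uIcc_of_le hcb] at hx)),
      intervalIntegral.integral_neg]
    refine congrArg _ (integral_eq_sub_of_hasDerivAt (fun x hx => hF x ?_) hg_cb)
    rw [Set.uIcc_of_le hcb] at hx
    exact ⟨hac.trans hx.1, hx.2⟩
  rw [← integral_add_adjacent_intervals hg_ac.abs hg_cb.abs, h_ac, h_cb]
  ring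

theorem interpolation_pos {a b t : ℝ} (ha : 0 < a) (hb : 0 < b) (ht : t ∈ Set.Icc (0 : ℝ) 1) :
    0 < t * b + (1 - t) * a := by
  obtain ⟨h0, h1⟩ := ht
  rcases h0.eq_or_lt with rfl | h0
  · simpa using ha
  · nlinarith [mul_pos h0 hb, mul_nonneg (sub_nonneg.mpr h1) ha.le]

noncomputable def lambdaPrimitive (a b u : ℝ) : ℝ :=
  -((a + b) / (b - a) ^ 2) * u⁻¹ - 2 / (b - a) ^ 2 * Real.log u

theorem hasDerivAt_lambdaPrimitive_interpolation {a b t : ℝ} (hab : a ≠ b)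
    (ht : t * b + (1 - t) * a ≠ 0) :
    HasDerivAt (fun s => lambdaPrimitive a b (s * b + (1 - s) * a))
      ((1 - 2 * t) / (t * b + (1 - t) * a) ^ 2) t := by
  have hL : HasDerivAt (fun s : ℝ => s * b + (1 - s) * a) (1 * b + (0 - 1) * a) t :=
    ((hasDerivAt_id t).mul_const b).add
      (((hasDerivAt_const t (1 : ℝ)).sub (hasDerivAt_id t)).mul_const a)
  refine (((hL.inv ht).const_mul _).sub ((hL.log ht).const_mul _)).congr_deriv ?_
  have : b - a ≠ 0 := sub_ne_zero.mpr hab.symm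
  field_simp
  ring

theorem lambdaPrimitive_eval {a b : ℝ} (ha : 0 < a) (hb : 0 < b) (hab : a ≠ b) :
    2 * lambdaPrimitive a b ((a + b) / 2) - lambdaPrimitive a b a - lambdaPrimitive a b b =
      1 / (a * b) - (2 / (b - a) ^ 2) * Real.log ((a + b) ^ 2 / (4 * a * b)) := by
  have hlog : Real.log ((a + b) ^ 2 / (4 * a * b))
      = 2 * Real.log ((a + b) / 2) - Real.log a - Real.log b := by
    rw [show (a + b) ^ 2 / (4 * a * b) = ((a + b) / 2) ^ 2 / (a * b) by ring,
      Real.log_div (by positivity) (by positivity), Real.log_pow, Real.log_mul ha.ne' hb.ne']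
    push_cast
    ring
  have : b - a ≠ 0 := sub_ne_zero.mpr hab.symm
  rw [hlog, lambdaPrimitive, lambdaPrimitive, lambdaPrimitive]
  field_simp
  ring

theorem lambda_one_closed_form (a b : ℝ) (ha : 0 < a) (hab : a < b) :
    ∫ t in (0:ℝ)..1, |1 - 2 * t| / (t * b + (1 - t) * a) ^ 2 =
      1 / (a * b) - (2 / (b - a) ^ 2) * Real.log ((a + b) ^ 2 / (4 * a * b)) := by
  have hb : 0 < b := ha.trans hab
  have hL : ∀ t ∈ Set.Icc (0 : ℝ) 1, 0 < t * b + (1 - t) * a := fun t ht =>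
    interpolation_pos ha hb ht
  have hcont : ContinuousOn (fun t : ℝ => (1 - 2 * t) / (t * b + (1 - t) * a) ^ 2)
      (Set.Icc 0 1) :=
    ContinuousOn.div (by fun_prop) (by fun_prop) fun t ht => (pow_pos (hL t ht) 2).ne'
  have hintegral := integral_abs_eq_of_hasDerivAt_of_sign_change (by norm_num : (0 : ℝ) ≤ 1 / 2)
    (by norm_num) (fun t ht => hasDerivAt_lambdaPrimitive_interpolation hab.ne (hL t ht).ne')
    (hcont.intervalIntegrable_of_Icc zero_le_one)
    (fun t ht => div_nonneg (by linarith [ht.2]) (sq_nonneg _))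
    (fun t ht => div_nonpos_of_nonpos_of_nonneg (by linarith [ht.1]) (sq_nonneg _))
  simp only [abs_div, abs_sq] at hintegral
  rw [hintegral, ← lambdaPrimitive_eval ha hb hab.ne,
    show (1 / 2 : ℝ) * b + (1 - 1 / 2) * a = (a + b) / 2 by ring]
  norm_num
end
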